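/- Let d ≥ 1, t > 0, and C > 0. There exist constants C₁* > 0 and C₂* > 0, depending only on d, t, and C, such that the following holds: for every integer N ≥ 1, every ε > 0, and all points γ₁, …, γ_N ∈ ℝ^d satisfying |γ_i − γ_j| ≥ C N^{−1/d} for all i ≠ j, one has (1/N) Σ_{i=1}^N ∫_0^t ∫_{|x| ≤ 2ε} (4πs)^{−d/2} exp(−|γ_i − x|²/(4s)) dx ds ≤ C₁* ε^d + C₂*/N. -/

import Mathlib

/-! Balls of radius `δ/2` around `δ`-separated points are disjoint, so comparing volumes shows
that at most `((2r + δ)/δ)^d` of the points lie within distance `r` of any `y`. After the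
substitution `y = γᵢ - x` the inner integrals are the heat-kernel masses of the balls
`closedBall γᵢ (2ε)`; every `y` lies in at most that many of them and the kernel has total mass
one, so their sum is at most `((4ε + δ)/δ)^d ≤ 2^(d-1) ((4ε/δ)^d + 1)`. Integrating over
`s ∈ (0, t]` and using `δ^d = C^d/N` for `δ = C N^(-1/d)` gives the bound. -/

open MeasureTheory Metric Module Finset Real
open scoped ENNReal

theorem card_le_of_pairwise_le_norm_sub {E ι : Type*} [NormedAddCommGroup E] [NormedSpace ℝ E]
    [FiniteDimensional ℝ E] {γ : ι → E} {δ : ℝ} (hδ : 0 < δ)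
    (hγ : Pairwise fun i j => δ ≤ ‖γ i - γ j‖) {s : Finset ι} {y : E} {r : ℝ} (hr : 0 ≤ r)
    (hs : ∀ i ∈ s, ‖γ i - y‖ ≤ r) :
    (#s : ℝ) ≤ ((2 * r + δ) / δ) ^ finrank ℝ E := by
  borelize E
  set μ : Measure E := Measure.addHaar
  have hdisj : (s : Set ι).PairwiseDisjoint fun i => ball (γ i) (δ / 2) := fun i _ j _ hij =>
    ball_disjoint_ball (by rw [dist_eq_norm]; linarith [hγ hij])
  have hsub : ⋃ i ∈ s, ball (γ i) (δ / 2) ⊆ ball y (r + δ / 2) :=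
    Set.iUnion₂_subset fun i hi => ball_subset_ball' (by rw [dist_eq_norm]; linarith [hs i hi])
  have hvol : (#s : ℝ≥0∞) * μ (ball 0 (δ / 2)) ≤ μ (ball 0 (r + δ / 2)) :=
    calc (#s : ℝ≥0∞) * μ (ball 0 (δ / 2)) = ∑ i ∈ s, μ (ball (γ i) (δ / 2)) := by
          simp [Measure.addHaar_ball_center]
      _ = μ (⋃ i ∈ s, ball (γ i) (δ / 2)) :=
          (measure_biUnion_finset hdisj fun _ _ => measurableSet_ball).symm
      _ ≤ μ (ball y (r + δ / 2)) := measure_mono hsub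
      _ = μ (ball 0 (r + δ / 2)) := Measure.addHaar_ball_center μ y _
  rw [Measure.addHaar_ball_of_pos μ 0 (r := δ / 2) (by positivity),
    Measure.addHaar_ball_of_pos μ 0 (r := r + δ / 2) (by positivity), ← mul_assoc,
    ENNReal.mul_le_mul_iff_left (measure_ball_pos μ 0 one_pos).ne' measure_ball_lt_top.ne,
    ← ENNReal.ofReal_natCast, ← ENNReal.ofReal_mul (by positivity),
    ENNReal.ofReal_le_ofReal_iff (by positivity)] at hvol
  rwa [show (2 * r + δ) / δ = (r + δ / 2) / (δ / 2) by field_simp, div_pow,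
    le_div_iff₀ (by positivity)]

open Classical in
theorem sum_setIntegral_le_mul_integral_of_card_le {X ι : Type*} [MeasurableSpace X]
    {μ : Measure X} {s : Finset ι} {A : ι → Set X} (hA : ∀ i ∈ s, MeasurableSet (A i))
    {f : X → ℝ} (hf₀ : ∀ x, 0 ≤ f x) (hf : Integrable f μ) {K : ℝ}
    (hK : ∀ x, (#{i ∈ s | x ∈ A i} : ℝ) ≤ K) :
    ∑ i ∈ s, ∫ x in A i, f x ∂μ ≤ K * ∫ x, f x ∂μ := by
  have hint : ∀ i ∈ s, Integrable ((A i).indicator f) μ := fun i hi => hf.indicator (hA i hi)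
  have hpt : ∀ x, ∑ i ∈ s, (A i).indicator f x ≤ K * f x := fun x =>
    calc ∑ i ∈ s, (A i).indicator f x = #{i ∈ s | x ∈ A i} * f x := by
          simp only [Set.indicator_apply, ← Finset.sum_filter, sum_const, nsmul_eq_mul]
      _ ≤ K * f x := mul_le_mul_of_nonneg_right (hK x) (hf₀ x)
  calc ∑ i ∈ s, ∫ x in A i, f x ∂μ = ∫ x, ∑ i ∈ s, (A i).indicator f x ∂μ := by
        rw [integral_finsetSum s hint]
        exact Finset.sum_congr rfl fun i hi => (integral_indicator (hA i hi)).symm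
    _ ≤ ∫ x, K * f x ∂μ := integral_mono (integrable_finsetSum s hint) (hf.const_mul K) hpt
    _ = K * ∫ x, f x ∂μ := integral_const_mul K f

theorem setIntegral_closedBall_zero_comp_sub {G F : Type*} [NormedAddCommGroup G]
    [MeasurableSpace G] [BorelSpace G] [NormedAddCommGroup F] [NormedSpace ℝ F]
    (μ : Measure G) [μ.IsAddLeftInvariant] [μ.IsNegInvariant] (f : G → F) (z : G) (r : ℝ) :
    ∫ x in closedBall 0 r, f (z - x) ∂μ = ∫ y in closedBall z r, f y ∂μ := by
  rw [← (μ.measurePreserving_sub_left z).setIntegral_preimage_emb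
    (MeasurableEquiv.subLeft z).measurableEmbedding f (closedBall z r)]
  congr 2
  ext x
  simp [dist_eq_norm]

section HeatKernel

variable {V : Type*} [NormedAddCommGroup V] [InnerProductSpace ℝ V]

noncomputable def heatKernel (s : ℝ) (y : V) : ℝ :=
  (4 * π * s) ^ (-(finrank ℝ V : ℝ) / 2) * exp (-‖y‖ ^ 2 / (4 * s))

theorem heatKernel_nonneg {s : ℝ} (hs : 0 ≤ s) (y : V) : 0 ≤ heatKernel s y :=
  mul_nonneg (rpow_nonneg (by positivity) _) (exp_nonneg _)

theorem measurable_heatKernel_uncurry [MeasurableSpace V] [BorelSpace V] :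
    Measurable (Function.uncurry (heatKernel (V := V))) := by
  unfold Function.uncurry heatKernel
  fun_prop

theorem heatKernel_eq_mul_gaussian (s : ℝ) (y : V) :
    heatKernel s y = (4 * π * s) ^ (-(finrank ℝ V : ℝ) / 2) * exp (-(4 * s)⁻¹ * ‖y‖ ^ 2) := by
  rw [heatKernel, neg_mul, ← div_eq_inv_mul, neg_div (4 * s)]

variable [FiniteDimensional ℝ V] [MeasurableSpace V] [BorelSpace V]

theorem integrable_heatKernel {s : ℝ} (hs : 0 < s) : Integrable (heatKernel (V := V) s) := by
  have hgauss : Integrable fun y : V => exp (-(4 * s)⁻¹ * ‖y‖ ^ 2) := by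
    refine (GaussianFourier.integrable_cexp_neg_mul_sq_norm_add (V := V) (b := ((4 * s)⁻¹ : ℝ))
      (by simp; positivity) 0 0).norm.congr (.of_forall fun y => ?_)
    simp only [zero_mul, add_zero, Complex.norm_exp]
    norm_cast
  exact (hgauss.const_mul _).congr (.of_forall fun y => (heatKernel_eq_mul_gaussian s y).symm)

theorem integral_heatKernel {s : ℝ} (hs : 0 < s) : ∫ y : V, heatKernel s y = 1 := by
  simp_rw [heatKernel_eq_mul_gaussian s]
  rw [integral_const_mul, GaussianFourier.integral_rexp_neg_mul_sq_norm (by positivity),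
    div_inv_eq_mul, show π * (4 * s) = 4 * π * s by ring, ← rpow_add (by positivity), neg_div,
    neg_add_cancel, rpow_zero]

theorem setIntegral_closedBall_heatKernel_sub_le_one {s : ℝ} (hs : 0 < s) (z : V) (r : ℝ) :
    ∫ x in closedBall 0 r, heatKernel s (z - x) ≤ 1 := by
  rw [setIntegral_closedBall_zero_comp_sub, ← integral_heatKernel (V := V) hs]
  exact setIntegral_le_integral (integrable_heatKernel hs)
    (.of_forall (heatKernel_nonneg hs.le))

theorem sum_setIntegral_closedBall_heatKernel_sub_le {ι : Type*} [Fintype ι] {γ : ι → V}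
    {δ : ℝ} (hδ : 0 < δ) (hγ : Pairwise fun i j => δ ≤ ‖γ i - γ j‖) {s r : ℝ} (hs : 0 < s)
    (hr : 0 ≤ r) :
    ∑ i, ∫ x in closedBall 0 r, heatKernel s (γ i - x) ≤ ((2 * r + δ) / δ) ^ finrank ℝ V := by
  classical
  simp_rw [setIntegral_closedBall_zero_comp_sub]
  refine (sum_setIntegral_le_mul_integral_of_card_le (fun _ _ => measurableSet_closedBall)
    (heatKernel_nonneg hs.le) (integrable_heatKernel hs) fun y =>
      card_le_of_pairwise_le_norm_sub hδ hγ (y := y) hr fun i hi => ?_).trans_eq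
    (by rw [integral_heatKernel hs, mul_one])
  simpa [dist_eq_norm, norm_sub_rev] using (Finset.mem_filter.1 hi).2

theorem integrableOn_setIntegral_closedBall_heatKernel_sub (z : V) (r t : ℝ) :
    IntegrableOn (fun s => ∫ x in closedBall 0 r, heatKernel s (z - x)) (Set.Ioc 0 t) := by
  have hmeas : StronglyMeasurable fun s => ∫ x in closedBall 0 r, heatKernel s (z - x) :=
    StronglyMeasurable.integral_prod_right' (f := fun p : ℝ × V => heatKernel p.1 (z - p.2))
      (measurable_heatKernel_uncurry.comp
        (measurable_fst.prodMk (measurable_const.sub measurable_snd))).stronglyMeasurable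
  refine (integrable_const 1).mono' hmeas.aestronglyMeasurable ?_
  filter_upwards [self_mem_ae_restrict measurableSet_Ioc] with s hs
  rw [norm_of_nonneg (setIntegral_nonneg measurableSet_closedBall
    fun x _ => heatKernel_nonneg hs.1.le _)]
  exact setIntegral_closedBall_heatKernel_sub_le_one hs.1 z r

theorem sum_integral_Ioc_setIntegral_closedBall_heatKernel_sub_le {ι : Type*} [Fintype ι]
    {γ : ι → V} {δ : ℝ} (hδ : 0 < δ) (hγ : Pairwise fun i j => δ ≤ ‖γ i - γ j‖) {r t : ℝ}
    (hr : 0 ≤ r) (ht : 0 ≤ t) :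
    ∑ i, ∫ s in Set.Ioc 0 t, ∫ x in closedBall 0 r, heatKernel s (γ i - x)
      ≤ t * ((2 * r + δ) / δ) ^ finrank ℝ V := by
  have hint := fun i (_ : i ∈ univ) => integrableOn_setIntegral_closedBall_heatKernel_sub (γ i) r t
  calc ∑ i, ∫ s in Set.Ioc 0 t, ∫ x in closedBall 0 r, heatKernel s (γ i - x)
      = ∫ s in Set.Ioc 0 t, ∑ i, ∫ x in closedBall 0 r, heatKernel s (γ i - x) :=
        (integral_finsetSum _ hint).symm
    _ ≤ ∫ _ in Set.Ioc 0 t, ((2 * r + δ) / δ) ^ finrank ℝ V :=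
        setIntegral_mono_on (integrable_finsetSum _ hint) (integrableOn_const measure_Ioc_lt_top.ne)
          measurableSet_Ioc fun s hs => sum_setIntegral_closedBall_heatKernel_sub_le hδ hγ hs.1 hr
    _ = t * ((2 * r + δ) / δ) ^ finrank ℝ V := by
        rw [setIntegral_const, volume_real_Ioc_of_le ht, sub_zero, smul_eq_mul]

end HeatKernel

theorem add_div_self_pow_le {a δ : ℝ} (ha : 0 ≤ a) (hδ : 0 < δ) (d : ℕ) :
    ((a + δ) / δ) ^ d ≤ 2 ^ (d - 1) * (a ^ d / δ ^ d + 1) := by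
  simpa only [add_div, div_self hδ.ne', div_pow, one_pow] using
    add_pow_le (div_nonneg ha hδ.le) zero_le_one d

theorem mul_rpow_neg_one_div_pow (C : ℝ) {N : ℝ} (hN : 0 ≤ N) {d : ℕ} (hd : d ≠ 0) :
    (C * N ^ (-(1 : ℝ) / d)) ^ d = C ^ d / N := by
  rw [mul_pow, ← rpow_natCast (N ^ (-(1 : ℝ) / d)), ← rpow_mul hN,
    div_mul_cancel₀ _ (Nat.cast_ne_zero.2 hd), rpow_neg_one, div_eq_mul_inv]

theorem brownian_separation_heat_kernel_bound (d : ℕ) (hd : 1 ≤ d)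
    (t : ℝ) (ht : 0 < t) (C : ℝ) (hC : 0 < C) :
    ∃ C₁ > (0 : ℝ), ∃ C₂ > (0 : ℝ), ∀ N : ℕ, 1 ≤ N → ∀ ε : ℝ, 0 < ε →
      ∀ γ : Fin N → EuclideanSpace ℝ (Fin d),
        (∀ i j, i ≠ j → C * (N : ℝ) ^ (-(1 : ℝ) / d) ≤ ‖γ i - γ j‖) →
        (1 / N) * ∑ i, ∫ s in Set.Ioc (0 : ℝ) t,
            ∫ x in Metric.closedBall (0 : EuclideanSpace ℝ (Fin d)) (2 * ε),
              (4 * Real.pi * s) ^ (-(d : ℝ) / 2) * Real.exp (-‖γ i - x‖ ^ 2 / (4 * s))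
          ≤ C₁ * ε ^ d + C₂ / N := by
  refine ⟨t * 2 ^ (d - 1) * 4 ^ d / C ^ d, by positivity, t * 2 ^ (d - 1), by positivity,
    fun N hN ε hε γ hγ => ?_⟩
  set δ := C * (N : ℝ) ^ (-(1 : ℝ) / d)
  have hN₀ : (0 : ℝ) < N := by exact_mod_cast hN
  have hδ : 0 < δ := by positivity
  have hocc := sum_integral_Ioc_setIntegral_closedBall_heatKernel_sub_le
    (V := EuclideanSpace ℝ (Fin d)) hδ hγ (r := 2 * ε) (by positivity) ht.le
  simp only [heatKernel, finrank_euclideanSpace_fin] at hocc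
  calc _ ≤ 1 / N * (t * ((2 * (2 * ε) + δ) / δ) ^ d) := by gcongr
    _ ≤ 1 / N * (t * (2 ^ (d - 1) * ((2 * (2 * ε)) ^ d / δ ^ d + 1))) := by
        gcongr
        exact add_div_self_pow_le (by positivity) hδ d
    _ = _ := by
        rw [mul_rpow_neg_one_div_pow C hN₀.le (by omega)]
        field_simp
        ring
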